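/- Define $R(\omega) = \frac{2 + \sqrt{2}\cos(3\pi/4 + \omega) - \Lambda(\omega)}{\sqrt{2}(1 - \cos\omega)}$ where $\Lambda(\omega) = 2 - \cos\omega + \sqrt{(3-\cos\omega)(1-\cos\omega)}$. Then $R(\omega) = -\frac{2\sqrt{2}}{\omega} + O(\omega)$ as $\omega \to 0^+$; in particular $|R(\omega)| \to \infty$ and there are constants $c, \omega_0 > 0$ such that $|R(\omega)| \ge c/\omega$ for $0 < \omega < \omega_0$. -/

import Mathlib

/-!
With `t = sin (ω / 2)` the identities `1 - cos ω = 2 t²`, `sin ω = 2 t cos (ω / 2)` and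
`(3 - cos ω) (1 - cos ω) = (2 t √(1 + t²))²` turn `R(ω)` into
`-(cos (ω / 2) + √(1 + t²)) / (√2 t)`. The numerator is `2 + O(ω²)` and `t = ω / 2 + O(ω³)`,
which gives `R(ω) = -2√2 / ω + O(ω)`; the lower bound `|R(ω)| ≥ √2 / ω` only needs the
numerator to be at least `1` and `t ≤ ω / 2`.
-/

open Real Filter

/-- The lattice vertical translation eigenvalue as a function of the frequency. -/
noncomputable def latticeEigenvalue (ω : ℝ) : ℝ :=
  2 - Real.cos ω + Real.sqrt ((3 - Real.cos ω) * (1 - Real.cos ω))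

/-- The coefficient ratio `R(ω)` relating the two opposite-frequency Fourier
modes of a lattice vertical translation eigenfunction. -/
noncomputable def coeffRatio (ω : ℝ) : ℝ :=
  (2 + Real.sqrt 2 * Real.cos (3*Real.pi/4 + ω) - latticeEigenvalue ω)
    / (Real.sqrt 2 * (1 - Real.cos ω))

open Topology

lemma cos_three_pi_div_four_add (ω : ℝ) :
    cos (3 * π / 4 + ω) = -(√2 / 2) * (cos ω + sin ω) := by
  rw [cos_add, show 3 * π / 4 = π - π / 4 by ring, cos_pi_sub, sin_pi_sub, cos_pi_div_four,
    sin_pi_div_four]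
  ring

lemma coeffRatio_eq_half_angle {ω : ℝ} (h : 0 ≤ sin (ω / 2)) :
    coeffRatio ω = -(cos (ω / 2) + √(1 + sin (ω / 2) ^ 2)) / (√2 * sin (ω / 2)) := by
  set t := sin (ω / 2)
  set k := cos (ω / 2)
  have hω : ω = 2 * (ω / 2) := by ring
  have hpy : t ^ 2 + k ^ 2 = 1 := sin_sq_add_cos_sq _
  have hcos : cos ω = 1 - 2 * t ^ 2 := by rw [hω, cos_two_mul]; linear_combination 2 * hpy
  have hsin : sin ω = 2 * t * k := by rw [hω, sin_two_mul]
  have hsqrt : √((3 - cos ω) * (1 - cos ω)) = 2 * t * √(1 + t ^ 2) := by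
    rw [← sqrt_sq (by positivity : 0 ≤ 2 * t * √(1 + t ^ 2)), mul_pow, sq_sqrt (by positivity),
      hcos]
    congr 1
    ring
  have h2 : √2 ^ 2 = 2 := sq_sqrt zero_le_two
  unfold coeffRatio latticeEigenvalue
  rw [cos_three_pi_div_four_add, hsqrt, hcos, hsin]
  rcases h.eq_or_lt with ht | ht
  · simp [← ht]
  · field_simp
    linear_combination (2 * t ^ 3 - t - 2 * t ^ 2 * k) * h2

lemma abs_cos_add_sqrt_one_add_sin_sq_sub_two_le (x : ℝ) :
    |cos x + √(1 + sin x ^ 2) - 2| ≤ x ^ 2 := by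
  have hS₁ : 1 ≤ √(1 + sin x ^ 2) := one_le_sqrt.mpr (by nlinarith [sq_nonneg (sin x)])
  have hS₂ : √(1 + sin x ^ 2) ≤ 1 + sin x ^ 2 / 2 :=
    (sqrt_le_left (by positivity)).mpr (by nlinarith [sq_nonneg (sin x ^ 2)])
  rw [abs_le]
  constructor <;>
    linarith [one_sub_sq_div_two_le_cos (x := x), cos_le_one x, sin_sq_le_sq (x := x)]

lemma abs_two_mul_sin_sub_mul_le {x : ℝ} (hx : 0 < x) :
    |2 * sin x - x * (cos x + √(1 + sin x ^ 2))| ≤ 4 / 3 * x ^ 3 := by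
  have hsin : |sin x - x| ≤ x ^ 3 / 6 :=
    abs_le.mpr ⟨by linarith [sin_gt_sub_cube hx], by linarith [sin_le hx.le, pow_pos hx 3]⟩
  have hrest := abs_cos_add_sqrt_one_add_sin_sq_sub_two_le x
  calc |2 * sin x - x * (cos x + √(1 + sin x ^ 2))|
      = |2 * (sin x - x) - x * (cos x + √(1 + sin x ^ 2) - 2)| := by ring_nf
    _ ≤ 2 * |sin x - x| + x * |cos x + √(1 + sin x ^ 2) - 2| := by
        grw [abs_sub, abs_mul, abs_mul, abs_two, abs_of_pos hx]
    _ ≤ 2 * (x ^ 3 / 6) + x * x ^ 2 := by gcongr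
    _ = 4 / 3 * x ^ 3 := by ring

lemma abs_coeffRatio_add_le {ω : ℝ} (h₀ : 0 < ω) (hπ : ω ≤ π) :
    |coeffRatio ω + 2 * √2 / ω| ≤ ω := by
  have hx : 0 < ω / 2 := by positivity
  have hsin : ω / π ≤ sin (ω / 2) := by
    have := mul_le_sin hx.le (by linarith)
    rwa [show 2 / π * (ω / 2) = ω / π by field_simp] at this
  have hsin_pos : 0 < sin (ω / 2) := (div_pos h₀ pi_pos).trans_le hsin
  have h2 : √2 ^ 2 = 2 := sq_sqrt zero_le_two
  have hconst : 1 / 3 ≤ √2 / π :=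
    (le_div_iff₀ pi_pos).mpr (by nlinarith [pi_le_four, sqrt_nonneg 2])
  rw [coeffRatio_eq_half_angle hsin_pos.le]
  set S := cos (ω / 2) + √(1 + sin (ω / 2) ^ 2)
  have hcommon : -S / (√2 * sin (ω / 2)) + 2 * √2 / ω
      = 2 * (2 * sin (ω / 2) - ω / 2 * S) / (√2 * sin (ω / 2) * ω) := by
    field_simp
    linear_combination (2 * sin (ω / 2)) * h2
  have hden : 0 < √2 * sin (ω / 2) * ω := by positivity
  rw [hcommon, abs_div, abs_of_pos hden, div_le_iff₀ hden, abs_mul, abs_two]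
  calc 2 * |2 * sin (ω / 2) - ω / 2 * S| ≤ 2 * (4 / 3 * (ω / 2) ^ 3) := by
        gcongr; exact abs_two_mul_sin_sub_mul_le hx
    _ = ω ^ 3 * (1 / 3) := by ring
    _ ≤ ω ^ 3 * (√2 / π) := mul_le_mul_of_nonneg_left hconst (by positivity)
    _ = ω * (√2 * (ω / π) * ω) := by ring
    _ ≤ ω * (√2 * sin (ω / 2) * ω) := by gcongr

lemma sqrt_two_div_le_abs_coeffRatio {ω : ℝ} (h₀ : 0 < ω) (hπ : ω ≤ π) :
    √2 / ω ≤ |coeffRatio ω| := by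
  have hsin_pos : 0 < sin (ω / 2) :=
    sin_pos_of_pos_of_lt_pi (by positivity) (by linarith [pi_pos])
  have hsin_le : sin (ω / 2) ≤ ω / 2 := sin_le (by positivity)
  have hcos : 0 ≤ cos (ω / 2) :=
    cos_nonneg_of_neg_pi_div_two_le_of_le (by linarith) (by linarith)
  have hsqrt : 1 ≤ √(1 + sin (ω / 2) ^ 2) :=
    one_le_sqrt.mpr (by nlinarith [sq_nonneg (sin (ω / 2))])
  have h2 : √2 ^ 2 = 2 := sq_sqrt zero_le_two
  rw [coeffRatio_eq_half_angle hsin_pos.le, neg_div, abs_neg, abs_of_pos (by positivity)]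
  calc √2 / ω = 1 / (√2 * (ω / 2)) := by field_simp; linear_combination h2
    _ ≤ 1 / (√2 * sin (ω / 2)) := by gcongr
    _ ≤ (cos (ω / 2) + √(1 + sin (ω / 2) ^ 2)) / (√2 * sin (ω / 2)) := by
        gcongr; linarith

/-- `R(ω) = -2√2/ω + O(ω)` as `ω → 0⁺`; in particular `|R(ω)| → ∞` and
`|R(ω)| ≥ c/ω` for small `ω > 0`. -/
theorem coeffRatio_asymptotics :
    (∃ C > 0, ∃ ω₁ > 0, ∀ ω : ℝ, 0 < ω → ω < ω₁ →
      |coeffRatio ω + 2 * Real.sqrt 2 / ω| ≤ C * ω) ∧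
    (∃ c > 0, ∃ ω₀ > 0, ∀ ω : ℝ, 0 < ω → ω < ω₀ → c / ω ≤ |coeffRatio ω|) ∧
    Tendsto (fun ω => |coeffRatio ω|) (nhdsWithin 0 (Set.Ioi 0)) atTop := by
  have hlower (ω : ℝ) (h₀ : 0 < ω) (hπ : ω < π) : √2 / ω ≤ |coeffRatio ω| :=
    sqrt_two_div_le_abs_coeffRatio h₀ hπ.le
  refine ⟨⟨1, one_pos, π, pi_pos, fun ω h₀ hπ => ?_⟩,
    ⟨√2, by positivity, π, pi_pos, hlower⟩, ?_⟩
  · rw [one_mul]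
    exact abs_coeffRatio_add_le h₀ hπ.le
  · have hblowup : Tendsto (fun ω : ℝ => √2 / ω) (𝓝[>] 0) atTop := by
      simpa only [div_eq_mul_inv] using
        tendsto_inv_nhdsGT_zero.const_mul_atTop (sqrt_pos.mpr two_pos)
    refine tendsto_atTop_mono' _ ?_ hblowup
    filter_upwards [Ioo_mem_nhdsGT pi_pos] with ω hω using hlower ω hω.1 hω.2
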